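/- If in Algorithm AddEdge an edge (u,v) is added, i.e., u ∈ para(v), l(u)+r(v) ≤ len(G) in G, and el(u)+er(v) > len(G_r) in the residue graph G_r, then after adding the edge: the longest path length of G is unchanged and the longest path length of G_r strictly increases. -/

import Mathlib

def IsPathFromTo {V : Type*} (E : V → V → Prop) (a b : V) (p : List V) : Prop :=
  p.Chain' E ∧ p.head? = some a ∧ p.getLast? = some b

def plen {V : Type*} (c : V → ℝ) (p : List V) : ℝ := (p.map c).sum

/-!
Split a path of `G + (u,v)` at its first use of the new edge: the part before is a path of `G`
ending at `u`, and since `u ∈ para(v)` no path of `G + (u,v)` leaving `v` can return to `u`,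
so the part after is a path of `G` starting at `v`. Hence the path lengths of `G + (u,v)` are those
of `G` together with the sums `l + r`, and `l(u) + r(v) ≤ len(G)` keeps the maximum, while
`el(u) + er(v) > len(G_r)` raises it in `G_r`. The degenerate case `u = v` cannot occur: merging the
two paths at `u` bounds `el(u) + er(v) - c_r(u)` by `len(G_r)`, so `c_r(u) > 0`, and pumping the
new loop at `u` would make the path lengths of `G_r + (u,u)` unbounded.
-/

open scoped Pointwise

def addEdge {V : Type*} (E : V → V → Prop) (u v : V) : V → V → Prop :=
  fun a b => E a b ∨ (a = u ∧ b = v)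

def pathLengths {V : Type*} (E : V → V → Prop) (c : V → ℝ) (a b : V) : Set ℝ :=
  {x | ∃ p, IsPathFromTo E a b p ∧ plen c p = x}

section

variable {V : Type*} {R S : V → V → Prop} {a b u v : V} {p q : List V}

@[simp]
lemma plen_nil (c : V → ℝ) : plen c [] = 0 := rfl

@[simp]
lemma plen_cons (c : V → ℝ) (x : V) (p : List V) : plen c (x :: p) = c x + plen c p := by
  simp [plen]

@[simp]
lemma plen_append (c : V → ℝ) (p q : List V) : plen c (p ++ q) = plen c p + plen c q := by
  simp [plen]

namespace IsPathFromTo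

lemma mono (h : ∀ x y, R x y → S x y) (hp : IsPathFromTo R a b p) : IsPathFromTo S a b p :=
  ⟨hp.1.imp h, hp.2⟩

lemma append (hp : IsPathFromTo R a u p) (hq : IsPathFromTo R v b q) (huv : R u v) :
    IsPathFromTo R a b (p ++ q) := by
  obtain ⟨hcp, hhp, hlp⟩ := hp
  obtain ⟨hcq, hhq, hlq⟩ := hq
  refine ⟨List.isChain_append.mpr ⟨hcp, hcq, ?_⟩, ?_, ?_⟩
  · intro x hx y hy
    simp only [hlp, hhq, Option.mem_def, Option.some.injEq] at hx hy
    exact hx ▸ hy ▸ huv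
  · rw [List.head?_append, hhp]; rfl
  · rw [List.getLast?_append, hlq]; rfl

lemma singleton (a : V) : IsPathFromTo R a a [a] := ⟨List.isChain_singleton a, rfl, rfl⟩

lemma exists_eq_cons (hp : IsPathFromTo R a b p) : ∃ t, p = a :: t := by
  obtain ⟨_, hh, _⟩ := hp
  cases p with
  | nil => simp at hh
  | cons x t => exact ⟨t, by simpa using hh⟩

lemma exists_merge (c : V → ℝ) (hp : IsPathFromTo R a u p) (hq : IsPathFromTo R u b q) :
    ∃ r, IsPathFromTo R a b r ∧ plen c r = plen c p + plen c q - c u := by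
  obtain ⟨t, rfl⟩ := hq.exists_eq_cons
  obtain ⟨hcq, -, hlq⟩ := hq
  cases t with
  | nil =>
    obtain rfl : u = b := by simpa using hlq
    exact ⟨p, hp, by simp⟩
  | cons y t =>
    obtain ⟨huy, hct⟩ := List.isChain_cons_cons.mp hcq
    refine ⟨p ++ y :: t, hp.append ⟨hct, rfl, ?_⟩ huy, by simp only [plen_append, plen_cons]; ring⟩
    rwa [List.getLast?_cons_cons] at hlq

lemma reflTransGen_of_mem (hp : IsPathFromTo R a b p) {x : V} (hx : x ∈ p) :
    Relation.ReflTransGen R a x := by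
  obtain ⟨hc, hh, -⟩ := hp
  induction p generalizing a with
  | nil => simp at hx
  | cons y t ih =>
    obtain rfl : y = a := by simpa using hh
    rcases List.mem_cons.mp hx with rfl | hx
    · exact .refl
    · cases t with
      | nil => simp at hx
      | cons z t =>
        obtain ⟨hyz, ht⟩ := List.isChain_cons_cons.mp hc
        exact .head hyz (ih hx ht rfl)

lemma split_addEdge {E : V → V → Prop} (hp : IsPathFromTo (addEdge E u v) a b p) :
    IsPathFromTo E a b p ∨
      ∃ p₁ p₂, p = p₁ ++ p₂ ∧ IsPathFromTo E a u p₁ ∧ IsPathFromTo (addEdge E u v) v b p₂ := by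
  obtain ⟨t, rfl⟩ := hp.exists_eq_cons
  obtain ⟨hc, -, hl⟩ := hp
  induction t generalizing a with
  | nil => exact .inl ⟨List.isChain_singleton a, rfl, hl⟩
  | cons y t ih =>
    obtain ⟨hay, ht⟩ := List.isChain_cons_cons.mp hc
    rw [List.getLast?_cons_cons] at hl
    by_cases hnew : a = u ∧ y = v
    · obtain ⟨rfl, rfl⟩ := hnew
      exact .inr ⟨[a], y :: t, rfl, singleton a, ht, rfl, hl⟩
    · have hE : E a y := hay.resolve_right hnew
      rcases ih ht hl with hpE | ⟨p₁, p₂, heq, hp₁, hp₂⟩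
      · exact .inl ((singleton a).append hpE hE)
      · exact .inr ⟨a :: p₁, p₂, by simp [heq], (singleton a).append hp₁ hE, hp₂⟩

end IsPathFromTo

lemma Relation.ReflTransGen.of_addEdge {E : V → V → Prop} (hau : ¬ Relation.ReflTransGen E a u)
    (h : Relation.ReflTransGen (addEdge E u v) a b) : Relation.ReflTransGen E a b := by
  induction h with
  | refl => exact .refl
  | tail _ hstep ih =>
    rcases hstep with hE | ⟨rfl, -⟩
    · exact ih.tail hE
    · exact absurd ih hau

lemma IsPathFromTo.of_addEdge {E : V → V → Prop} (hau : ¬ Relation.ReflTransGen E a u)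
    (hp : IsPathFromTo (addEdge E u v) a b p) : IsPathFromTo E a b p := by
  refine ⟨?_, hp.2⟩
  refine List.IsChain.imp_of_mem_imp (fun x y hx _ hxy => ?_) hp.1
  rcases hxy with hE | ⟨rfl, -⟩
  · exact hE
  · exact absurd ((hp.reflTransGen_of_mem hx).of_addEdge hau) hau

lemma pathLengths_mono (h : ∀ x y, R x y → S x y) (c : V → ℝ) :
    pathLengths R c a b ⊆ pathLengths S c a b :=
  fun _ ⟨p, hp, hx⟩ => ⟨p, hp.mono h, hx⟩

lemma add_sub_mem_pathLengths {c : V → ℝ} {x y : ℝ} (hx : x ∈ pathLengths R c a u)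
    (hy : y ∈ pathLengths R c u b) : x + y - c u ∈ pathLengths R c a b := by
  obtain ⟨p, hp, rfl⟩ := hx
  obtain ⟨q, hq, rfl⟩ := hy
  exact hp.exists_merge c hq

lemma not_bddAbove_pathLengths_of_loop {c : V → ℝ} (hloop : R u u) (hpos : 0 < c u)
    (hau : (pathLengths R c a u).Nonempty) (hub : (pathLengths R c u b).Nonempty) :
    ¬ BddAbove (pathLengths R c a b) := by
  obtain ⟨x, p, hp, rfl⟩ := hau
  obtain ⟨y, q, hq, rfl⟩ := hub
  have hpump : ∀ n : ℕ, ∃ p', IsPathFromTo R a u p' ∧ plen c p' = plen c p + n * c u := by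
    intro n
    induction n with
    | zero => exact ⟨p, hp, by simp⟩
    | succ n ih =>
      obtain ⟨p', hp', hlen⟩ := ih
      exact ⟨p' ++ [u], hp'.append (.singleton u) hloop, by
        simp only [plen_append, plen_cons, plen_nil, hlen]; push_cast; ring⟩
  rintro ⟨M, hM⟩
  obtain ⟨n, hn⟩ := exists_nat_gt ((M - plen c p - plen c q) / c u)
  obtain ⟨p', hp', hlen⟩ := hpump n
  have hle : plen c (p' ++ q) ≤ M := hM ⟨_, hp'.append hq hloop, rfl⟩
  rw [div_lt_iff₀ hpos] at hn
  simp only [plen_append, hlen] at hle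
  linarith

lemma add_subset_pathLengths_addEdge (E : V → V → Prop) (c : V → ℝ) :
    pathLengths E c a u + pathLengths E c v b ⊆ pathLengths (addEdge E u v) c a b := by
  rintro _ ⟨_, ⟨p, hp, rfl⟩, _, ⟨q, hq, rfl⟩, rfl⟩
  have hmono : ∀ x y, E x y → addEdge E u v x y := fun _ _ => .inl
  exact ⟨p ++ q, (hp.mono hmono).append (hq.mono hmono) (.inr ⟨rfl, rfl⟩), plen_append c p q⟩

lemma pathLengths_addEdge {E : V → V → Prop} (hvu : ¬ Relation.ReflTransGen E v u)
    (c : V → ℝ) :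
    pathLengths (addEdge E u v) c a b =
      pathLengths E c a b ∪ (pathLengths E c a u + pathLengths E c v b) := by
  refine subset_antisymm ?_ (Set.union_subset (pathLengths_mono (fun _ _ => .inl) c)
    (add_subset_pathLengths_addEdge E c))
  rintro _ ⟨p, hp, rfl⟩
  rcases hp.split_addEdge with hpE | ⟨p₁, p₂, rfl, hp₁, hp₂⟩
  · exact .inl ⟨p, hpE, rfl⟩
  · exact .inr ⟨_, ⟨p₁, hp₁, rfl⟩, _, ⟨p₂, hp₂.of_addEdge hvu, rfl⟩, (plen_append c p₁ p₂).symm⟩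

end

theorem stmt17_general {V : Type*}
    (E : V → V → Prop) (c cr : V → ℝ) (src snk u v : V)
    (hpar : ¬ Relation.TransGen E u v ∧ ¬ Relation.TransGen E v u)
    (lu rv elu erv lenG lenG' lenGr lenGr' : ℝ)
    (hlu : IsGreatest {x | ∃ p, IsPathFromTo E src u p ∧ plen c p = x} lu)
    (hrv : IsGreatest {x | ∃ p, IsPathFromTo E v snk p ∧ plen c p = x} rv)
    (helu : IsGreatest {x | ∃ p, IsPathFromTo E src u p ∧ plen cr p = x} elu)
    (herv : IsGreatest {x | ∃ p, IsPathFromTo E v snk p ∧ plen cr p = x} erv)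
    (hlen : IsGreatest {x | ∃ p, IsPathFromTo E src snk p ∧ plen c p = x} lenG)
    (hlenr : IsGreatest {x | ∃ p, IsPathFromTo E src snk p ∧ plen cr p = x} lenGr)
    (hlen' : IsGreatest {x | ∃ p,
        IsPathFromTo (fun a b => E a b ∨ (a = u ∧ b = v)) src snk p ∧ plen c p = x} lenG')
    (hlenr' : IsGreatest {x | ∃ p,
        IsPathFromTo (fun a b => E a b ∨ (a = u ∧ b = v)) src snk p ∧ plen cr p = x} lenGr')
    (hle : lu + rv ≤ lenG)
    (hgt : elu + erv > lenGr) :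
    lenG' = lenG ∧ lenGr' > lenGr := by
  have hlenr'_ge : elu + erv ≤ lenGr' :=
    hlenr'.2 (add_subset_pathLengths_addEdge E cr (Set.add_mem_add helu.1 herv.1))
  have hne : u ≠ v := by
    rintro rfl
    have hpos : 0 < cr u := by linarith [hlenr.2 (add_sub_mem_pathLengths helu.1 herv.1)]
    exact not_bddAbove_pathLengths_of_loop (R := addEdge E u u) (.inr ⟨rfl, rfl⟩) hpos
      ⟨_, pathLengths_mono (fun _ _ => .inl) cr helu.1⟩
      ⟨_, pathLengths_mono (fun _ _ => .inl) cr herv.1⟩ hlenr'.bddAbove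
  have hvu : ¬ Relation.ReflTransGen E v u := fun h =>
    (Relation.reflTransGen_iff_eq_or_transGen.mp h).elim hne hpar.2
  have hG' : IsGreatest (pathLengths E c src snk ∪ (pathLengths E c src u + pathLengths E c v snk))
      lenG' := pathLengths_addEdge hvu c ▸ hlen'
  refine ⟨le_antisymm ?_ (hG'.2 (.inl hlen.1)), by linarith⟩
  exact hG'.1.elim (hlen.2 ·) fun h => (add_mem_upperBounds_add hlu.2 hrv.2 h).trans hle

/-- If `AddEdge` adds the edge `(u,v)` — i.e. `u ∈ para(v)`,
`l(u) + r(v) ≤ len(G)` in `G`, and `el(u) + er(v) > len(G_r)` in the residue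
graph `G_r` (same graph, with weights `cr`, some zeroed) — then the longest path
length of `G` is unchanged while that of `G_r` strictly increases. -/
theorem stmt17 {V : Type*} [Fintype V] [DecidableEq V]
    (E : V → V → Prop) (c cr : V → ℝ) (src snk u v : V)
    (hacyc : ∀ w, ¬ Relation.TransGen E w w)
    (hc : ∀ w, 0 ≤ c w)
    (hcr : ∀ w, cr w = c w ∨ cr w = 0)
    (hsrc : ∀ w, ¬ E w src) (hsnk : ∀ w, ¬ E snk w)
    (hpar : ¬ Relation.TransGen E u v ∧ ¬ Relation.TransGen E v u)
    (lu rv elu erv lenG lenG' lenGr lenGr' : ℝ)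
    (hlu : IsGreatest {x | ∃ p, IsPathFromTo E src u p ∧ plen c p = x} lu)
    (hrv : IsGreatest {x | ∃ p, IsPathFromTo E v snk p ∧ plen c p = x} rv)
    (helu : IsGreatest {x | ∃ p, IsPathFromTo E src u p ∧ plen cr p = x} elu)
    (herv : IsGreatest {x | ∃ p, IsPathFromTo E v snk p ∧ plen cr p = x} erv)
    (hlen : IsGreatest {x | ∃ p, IsPathFromTo E src snk p ∧ plen c p = x} lenG)
    (hlenr : IsGreatest {x | ∃ p, IsPathFromTo E src snk p ∧ plen cr p = x} lenGr)
    (hlen' : IsGreatest {x | ∃ p,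
        IsPathFromTo (fun a b => E a b ∨ (a = u ∧ b = v)) src snk p ∧ plen c p = x} lenG')
    (hlenr' : IsGreatest {x | ∃ p,
        IsPathFromTo (fun a b => E a b ∨ (a = u ∧ b = v)) src snk p ∧ plen cr p = x} lenGr')
    (hle : lu + rv ≤ lenG)
    (hgt : elu + erv > lenGr) :
    lenG' = lenG ∧ lenGr' > lenGr :=
  stmt17_general E c cr src snk u v hpar lu rv elu erv lenG lenG' lenGr lenGr' hlu hrv helu herv
    hlen hlenr hlen' hlenr' hle hgt
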